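/- arXiv:0904.4874 — 14 statements merged into one kernel-verified Lean document; each statement's English description precedes it below -/
import Mathlib

section
/- Let (A, ⋆, α, 1) be a unital hom-associative algebra over a commutative ring k. Then for all x, y, z ∈ A: (i) α(x) ⋆ (y ⋆ z) = (α(x) ⋆ y) ⋆ z; (ii) x ⋆ (α(y) ⋆ z) = (x ⋆ α(y)) ⋆ z; (iii) x ⋆ (y ⋆ α(z)) = (x ⋆ y) ⋆ α(z); (iv) α(x ⋆ (y ⋆ z)) = α((x ⋆ y) ⋆ z). In other words, the image of α lies in the nucleus of the nonassociative algebra (A, ⋆). -/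
/-- Prop 1.1: In a unital hom-associative algebra `(A, ⋆, α, 1)` over a commutative
ring `k`, for all `x, y, z`:
`α(x) ⋆ (y ⋆ z) = (α(x) ⋆ y) ⋆ z`, `x ⋆ (α(y) ⋆ z) = (x ⋆ α(y)) ⋆ z`,
`x ⋆ (y ⋆ α(z)) = (x ⋆ y) ⋆ α(z)`, and `α(x ⋆ (y ⋆ z)) = α((x ⋆ y) ⋆ z)`;
in particular the image of `α` lies in the nucleus of `(A, ⋆)`. -/
theorem unital_homAssoc_image_in_nucleus
    {k A : Type*} [CommRing k] [AddCommGroup A] [Module k A]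
    (mul : A →ₗ[k] A →ₗ[k] A) (α : A →ₗ[k] A) (one : A)
    (hom : ∀ x y z : A, mul (α x) (mul y z) = mul (mul x y) (α z))
    (hone : ∀ x : A, mul one x = x ∧ mul x one = x) :
    ∀ x y z : A,
      mul (α x) (mul y z) = mul (mul (α x) y) z ∧
      mul x (mul (α y) z) = mul (mul x (α y)) z ∧
      mul x (mul y (α z)) = mul (mul x y) (α z) ∧
      α (mul x (mul y z)) = α (mul (mul x y) z) := by
  have hL : ∀ x : A, mul one x = x := fun x => (hone x).1
  have hR : ∀ x : A, mul x one = x := fun x => (hone x).2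
  -- mul c (α one) = α c
  have hco : ∀ c : A, mul c (α one) = α c := by
    intro c
    have := hom c one one
    rw [hL, hR, hR] at this; exact this.symm
  -- mul (α one) c = α c
  have hoc : ∀ c : A, mul (α one) c = α c := by
    intro c
    have := hom one one c
    rwa [hL, hR, hL] at this
  -- α a ⋆ b = α (a ⋆ b)
  have h1 : ∀ a b : A, mul (α a) b = α (mul a b) := by
    intro a b
    have := hom a b one
    rwa [hR, hco] at this
  -- a ⋆ α b = α (a ⋆ b)
  have h2 : ∀ a b : A, mul a (α b) = α (mul a b) := by
    intro a b
    have := hom one a b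
    rw [hL, hoc] at this; exact this.symm
  intro x y z
  have hiv : α (mul x (mul y z)) = α (mul (mul x y) z) := by
    rw [← h1, hom x y z, h2]
  refine ⟨?_, ?_, ?_, hiv⟩
  · rw [h1, h1 x y, h1, hiv]
  · rw [h1, h2, h2 x y, h1, hiv]
  · rw [h2, h2, h2, hiv]
end

section
/- Let (A, ⋆, α, 1) be a unital hom-associative algebra over a commutative ring k. Then both the image Im(α) and the kernel Ke(α) of α are stable under left and right multiplication by arbitrary elements of A (i.e., they are two-sided ideals of (A, ⋆)), and both are stable under α. -/
/-- In a unital hom-associative algebra `(A, ⋆, α, 1)` over a commutative ring `k`,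
the image `Im(α)` and kernel `Ke(α)` of `α` are stable under left and right
multiplication by arbitrary elements of `A` (they are two-sided ideals of `(A,⋆)`),
and both are stable under `α`. -/
theorem unital_homAssoc_range_ker_ideals
    {k A : Type*} [CommRing k] [AddCommGroup A] [Module k A]
    (mul : A →ₗ[k] A →ₗ[k] A) (α : A →ₗ[k] A) (one : A)
    (hom : ∀ x y z : A, mul (α x) (mul y z) = mul (mul x y) (α z))
    (hone : ∀ x : A, mul one x = x ∧ mul x one = x) :
    (∀ x ∈ LinearMap.range α, ∀ y : A,
        mul y x ∈ LinearMap.range α ∧ mul x y ∈ LinearMap.range α ∧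
        α x ∈ LinearMap.range α) ∧
    (∀ x ∈ LinearMap.ker α, ∀ y : A,
        mul y x ∈ LinearMap.ker α ∧ mul x y ∈ LinearMap.ker α ∧
        α x ∈ LinearMap.ker α) := by
  -- key : α x ⋆ z = x ⋆ α z
  have key : ∀ x z : A, mul (α x) z = mul x (α z) := by
    intro x z
    have h := hom x one z
    rwa [(hone z).1, (hone x).2] at h
  -- α w = α 1 ⋆ w and α w = w ⋆ α 1
  have hαone_left : ∀ w : A, mul (α one) w = α w := by
    intro w
    rw [key one w, (hone (α w)).1]
  have hαone_right : ∀ w : A, mul w (α one) = α w := by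
    intro w
    rw [← key w one, (hone (α w)).2]
  have αmul_left : ∀ y a : A, α (mul y a) = mul y (α a) := by
    intro y a
    have h := hom one y a
    rw [(hone y).1, hαone_left] at h
    exact h
  have αmul_right : ∀ a y : A, α (mul a y) = mul (α a) y := by
    intro a y
    have h := hom a y one
    rw [(hone y).2, hαone_right] at h
    exact h.symm
  constructor
  · rintro x ⟨a, rfl⟩ y
    refine ⟨⟨mul y a, αmul_left y a⟩, ⟨mul a y, αmul_right a y⟩, ⟨α a, rfl⟩⟩
  · intro x hx y
    rw [LinearMap.mem_ker] at hx
    refine ⟨?_, ?_, ?_⟩ <;> rw [LinearMap.mem_ker]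
    · rw [αmul_left, hx, map_zero]
    · rw [αmul_right, hx]; simp
    · rw [hx, map_zero]
end

section
/- Let (A, ⋆, α, 1) be a unital hom-associative algebra over a commutative ring k. If α is surjective, then the multiplication ⋆ is associative: (x ⋆ y) ⋆ z = x ⋆ (y ⋆ z) for all x, y, z ∈ A. -/
/-- Corollary: a unital hom-associative algebra over a commutative ring whose
twisting map `α` is surjective is associative. -/
theorem unital_homAssoc_surjective_implies_associative
    {k A : Type*} [CommRing k] [AddCommGroup A] [Module k A]
    (mul : A →ₗ[k] A →ₗ[k] A) (α : A →ₗ[k] A) (one : A)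
    (hom : ∀ x y z : A, mul (α x) (mul y z) = mul (mul x y) (α z))
    (hone : ∀ x : A, mul one x = x ∧ mul x one = x)
    (hsurj : Function.Surjective α) :
    ∀ x y z : A, mul (mul x y) z = mul x (mul y z) := by
  -- L1 : α(x) ⋆ w = x ⋆ α(w)
  have L1 : ∀ x w : A, mul (α x) w = mul x (α w) := by
    intro x w
    have h := hom x one w
    rwa [(hone w).1, (hone x).2] at h
  -- α(w) = α(1) ⋆ w
  have L0 : ∀ w : A, α w = mul (α one) w := by
    intro w
    rw [L1 one w, (hone (α w)).1]
  -- L2 : α(y ⋆ z) = y ⋆ α(z)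
  have L2 : ∀ y z : A, α (mul y z) = mul y (α z) := by
    intro y z
    have h := hom one y z
    rw [(hone y).1] at h
    rw [L0 (mul y z), h]
  intro x y z
  obtain ⟨z', rfl⟩ := hsurj z
  rw [← hom x y z', L1, L2]
end

section
/- Let (A, ⋆, α, 1) be a unital hom-associative algebra over a commutative ring k. If α is injective, then the multiplication ⋆ is associative: (x ⋆ y) ⋆ z = x ⋆ (y ⋆ z) for all x, y, z ∈ A. -/
/-- Corollary: a unital hom-associative algebra over a commutative ring whose
twisting map `α` is injective is associative. -/
theorem unital_homAssoc_injective_implies_associative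
    {k A : Type*} [CommRing k] [AddCommGroup A] [Module k A]
    (mul : A →ₗ[k] A →ₗ[k] A) (α : A →ₗ[k] A) (one : A)
    (hom : ∀ x y z : A, mul (α x) (mul y z) = mul (mul x y) (α z))
    (hone : ∀ x : A, mul one x = x ∧ mul x one = x)
    (hinj : Function.Injective α) :
    ∀ x y z : A, mul (mul x y) z = mul x (mul y z) := by
  -- α(u⋆v) = u⋆α(v)
  have e2 : ∀ u v : A, α (mul u v) = mul u (α v) := by
    intro u v
    have h1 := hom one one (mul u v)
    have h2 := hom one u v
    simp only [(hone _).1, (hone _).2] at h1 h2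
    rw [← h1, h2]
  -- α(u⋆v) = α(u)⋆v
  have e3 : ∀ u v : A, α (mul u v) = mul (α u) v := by
    intro u v
    have h1 := hom (mul u v) one one
    have h2 := hom u v one
    simp only [(hone _).1, (hone _).2] at h1 h2
    rw [h1, h2]
  intro x y z
  apply hinj
  rw [e2 (mul x y) z, ← hom, ← e3]
end

section
/- Let (A, ⋆, α, 1) be a unital hom-associative algebra over a commutative ring k. If α is surjective, then α is injective. -/
/-- Corollary: in a unital hom-associative algebra over a commutative ring,
if the twisting map `α` is surjective then it is injective. -/
theorem unital_homAssoc_surjective_implies_injective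
    {k A : Type*} [CommRing k] [AddCommGroup A] [Module k A]
    (mul : A →ₗ[k] A →ₗ[k] A) (α : A →ₗ[k] A) (one : A)
    (hom : ∀ x y z : A, mul (α x) (mul y z) = mul (mul x y) (α z))
    (hone : ∀ x : A, mul one x = x ∧ mul x one = x)
    (hsurj : Function.Surjective α) :
    Function.Injective α := by
  obtain ⟨a, ha⟩ := hsurj one
  have key : ∀ x : A, x = mul a (α x) := by
    intro x
    have h := hom a one x
    rw [ha, (hone x).1, (hone x).1, (hone a).2] at h
    exact h
  intro x y hxy
  rw [key x, key y, hxy]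
end

section
/- Let (A, ⋆, α, 1) be a unital hom-associative algebra over a field K. If the codimension of Im(α) as a K-vector subspace of A is at most 1, then the multiplication ⋆ is associative. -/
/-- Prop (codim 1): a unital hom-associative algebra over a field `K` whose twisting
map `α` has image of codimension at most `1` is associative. -/
theorem unital_homAssoc_codim_le_one_implies_associative
    {K A : Type*} [Field K] [AddCommGroup A] [Module K A]
    (mul : A →ₗ[K] A →ₗ[K] A) (α : A →ₗ[K] A) (one : A)
    (hom : ∀ x y z : A, mul (α x) (mul y z) = mul (mul x y) (α z))
    (hone : ∀ x : A, mul one x = x ∧ mul x one = x)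
    (hcodim : Module.rank K (A ⧸ LinearMap.range α) ≤ 1) :
    ∀ x y z : A, mul (mul x y) z = mul x (mul y z) := by
  -- basic identities
  have L2 : ∀ t, α t = mul t (α one) := by
    intro t
    have h := hom t one one
    simpa [(hone one).1, (hone t).2, (hone (α t)).2] using h
  have L1 : ∀ t, α t = mul (α one) t := by
    intro t
    have h := hom one one t
    simpa [(hone one).1, (hone t).1, (hone (α t)).1] using h.symm
  have L3 : ∀ x y, mul (α x) y = α (mul x y) := by
    intro x y
    have h := hom x y one
    rw [(hone y).2] at h
    rw [h, ← L2]
  have L4 : ∀ x y, mul x (α y) = α (mul x y) := by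
    intro x y
    have h := hom one x y
    rw [(hone x).1] at h
    rw [← h, ← L1]
  -- the associator is killed by α
  have Kker : ∀ x y z, α (mul (mul x y) z) = α (mul x (mul y z)) := by
    intro x y z
    rw [← L4 (mul x y) z, ← hom, L3]
  -- associativity with first slot in the range of α
  have Z1 : ∀ a y z, mul (mul (α a) y) z = mul (α a) (mul y z) := by
    intro a y z
    rw [L3 a y, L3 (mul a y) z, L3 a (mul y z), Kker]
  -- decomposition of an arbitrary element
  have hdec : ∀ x : A, ∃ a : A, ∃ c : K, x = α a + c • one := by
    by_cases honem : one ∈ LinearMap.range α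
    · obtain ⟨u, hu⟩ := honem
      intro x
      refine ⟨mul x u, 0, ?_⟩
      have h := L4 x u
      rw [hu, (hone x).2] at h
      rw [← h, zero_smul, add_zero]
    · intro x
      obtain ⟨v, hv⟩ := rank_le_one_iff.mp hcodim
      obtain ⟨r, hr⟩ := hv (Submodule.Quotient.mk x)
      obtain ⟨s, hs⟩ := hv (Submodule.Quotient.mk one)
      have hone' : (Submodule.Quotient.mk one : A ⧸ LinearMap.range α) ≠ 0 := by
        simpa [Submodule.Quotient.mk_eq_zero] using honem
      have hs0 : s ≠ 0 := by
        rintro rfl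
        exact hone' (by simpa using hs.symm)
      have hx : (Submodule.Quotient.mk x : A ⧸ LinearMap.range α)
          = (r * s⁻¹) • Submodule.Quotient.mk one := by
        rw [← hs, ← hr, smul_smul]
        congr 1
        field_simp
      have : x - (r * s⁻¹) • one ∈ LinearMap.range α := by
        rw [← Submodule.Quotient.mk_eq_zero]
        simpa [Submodule.Quotient.mk_sub, Submodule.Quotient.mk_smul, sub_eq_zero] using hx
      obtain ⟨a, ha⟩ := this
      exact ⟨a, r * s⁻¹, by rw [ha]; abel⟩
  -- conclude
  intro x y z
  obtain ⟨a, c, rfl⟩ := hdec x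
  simp only [map_add, map_smul, LinearMap.add_apply, LinearMap.smul_apply]
  rw [Z1, (hone y).1, (hone (mul y z)).1]
end

section
/- Let (A, ⋆, α, 1) be a unital hom-associative algebra over a field K such that the multiplication ⋆ is commutative. If the codimension of Im(α) as a K-vector subspace of A is at most 2, then the multiplication ⋆ is associative. -/
private lemma dep3_aux {K Q : Type*} [Field K] [AddCommGroup Q] [Module K Q]
    (h : Module.rank K Q ≤ 2) (u v w : Q) :
    ∃ c0 c1 c2 : K, (c0 ≠ 0 ∨ c1 ≠ 0 ∨ c2 ≠ 0) ∧ c0 • u + c1 • v + c2 • w = 0 := by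
  have hnli : ¬ LinearIndependent K ![u, v, w] := by
    intro hli
    have h3 := hli.cardinal_lift_le_rank
    have h4 := Cardinal.lift_le.{0}.mpr h
    simp only [Cardinal.mk_fintype, Fintype.card_fin, Cardinal.lift_ofNat,
      Cardinal.lift_natCast, Nat.cast_ofNat] at h3 h4
    have := h3.trans h4
    norm_num at this
  rw [Fintype.not_linearIndependent_iff] at hnli
  obtain ⟨g, hg, i, hi⟩ := hnli
  refine ⟨g 0, g 1, g 2, ?_, ?_⟩
  · fin_cases i
    · exact Or.inl hi
    · exact Or.inr (Or.inl hi)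
    · exact Or.inr (Or.inr hi)
  · simpa [Fin.sum_univ_three] using hg

private lemma mem_span_pair_of_rank_le_two_aux {K Q : Type*} [Field K] [AddCommGroup Q]
    [Module K Q] (h : Module.rank K Q ≤ 2) (e w v : Q) (he : e ≠ 0)
    (hw : w ∉ Submodule.span K {e}) : v ∈ Submodule.span K {e, w} := by
  obtain ⟨c0, c1, c2, hne, hsum⟩ := dep3_aux h e w v
  by_cases h2 : c2 = 0
  · exfalso
    subst h2
    rw [zero_smul, add_zero] at hsum
    by_cases h1 : c1 = 0
    · subst h1
      rw [zero_smul, add_zero] at hsum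
      have hc0 : c0 ≠ 0 := by tauto
      exact he (by simpa [smul_eq_zero, hc0] using hsum)
    · apply hw
      have : w = (-(c1⁻¹ * c0)) • e := by
        have h5 : c1 • w = (-c0) • e := by
          rw [neg_smul, eq_neg_iff_add_eq_zero, add_comm]; exact hsum
        have := congrArg (fun t => c1⁻¹ • t) h5
        simpa [smul_smul, inv_mul_cancel₀ h1, mul_comm, neg_smul] using this
      rw [this]
      exact Submodule.smul_mem _ _ (Submodule.mem_span_singleton_self e)
  · have h5 : c2 • v = (-c0) • e + (-c1) • w := by
      rw [neg_smul, neg_smul, ← neg_add, eq_neg_iff_add_eq_zero, add_comm]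
      exact hsum
    have h6 : v = (c2⁻¹ * -c0) • e + (c2⁻¹ * -c1) • w := by
      have := congrArg (fun t => c2⁻¹ • t) h5
      simpa [smul_smul, smul_add, inv_mul_cancel₀ h2] using this
    exact Submodule.mem_span_pair.mpr ⟨_, _, h6.symm⟩

/-- Prop (codim 2, commutative case): a commutative unital hom-associative algebra
over a field `K` whose twisting map `α` has image of codimension at most `2` is
associative. -/
theorem unital_homAssoc_comm_codim_le_two_implies_associative
    {K A : Type*} [Field K] [AddCommGroup A] [Module K A]
    (mul : A →ₗ[K] A →ₗ[K] A) (α : A →ₗ[K] A) (one : A)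
    (hom : ∀ x y z : A, mul (α x) (mul y z) = mul (mul x y) (α z))
    (hone : ∀ x : A, mul one x = x ∧ mul x one = x)
    (hcomm : ∀ x y : A, mul x y = mul y x)
    (hcodim : Module.rank K (A ⧸ LinearMap.range α) ≤ 2) :
    ∀ x y z : A, mul (mul x y) z = mul x (mul y z) := by
  have honeL : ∀ x, mul one x = x := fun x => (hone x).1
  have honeR : ∀ x, mul x one = x := fun x => (hone x).2
  have hα : ∀ x : A, α x = mul (α one) x := by
    intro x
    have h := hom x one one
    rw [honeL one, honeR (α x), honeR x] at h
    rw [h, hcomm]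
  have central : ∀ x y : A, mul (α one) (mul x y) = mul (mul (α one) x) y := by
    intro x y
    have h := hom x y one
    rw [honeR y, hα x] at h
    rw [h, hcomm]
  have slide : ∀ x y : A, mul (α one) (mul x y) = mul x (mul (α one) y) := by
    intro x y
    have h := hom one x y
    rw [honeL x, hα y] at h
    exact h
  have aT : ∀ x y z : A, mul (α one) (mul (mul x y) z) = mul (α one) (mul x (mul y z)) := by
    intro x y z
    have h := hom x y z
    rw [hα x, hα z] at h
    rw [slide (mul x y) z, central x (mul y z)]
    exact h.symm
  -- associativity when some slot is in the range of α
  have Trange1 : ∀ i y z : A, mul (mul (α i) y) z = mul (α i) (mul y z) := by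
    intro i y z
    rw [hα i, ← central i y, ← central (mul i y) z, ← central i (mul y z)]
    exact aT i y z
  have Trange2 : ∀ i x z : A, mul (mul x (α i)) z = mul x (mul (α i) z) := by
    intro i x z
    rw [hα i, ← slide x i, ← central (mul x i) z, ← central i z, ← slide x (mul i z)]
    exact aT x i z
  have Trange3 : ∀ i x y : A, mul (mul x y) (α i) = mul x (mul y (α i)) := by
    intro i x y
    rw [hα i, ← slide (mul x y) i, ← slide y i, ← slide x (mul y i)]
    exact aT x y i
  -- associativity when some slot is `one`
  have Tone1 : ∀ y z : A, mul (mul one y) z = mul one (mul y z) := by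
    intro y z; rw [honeL, honeL]
  have Tone2 : ∀ x z : A, mul (mul x one) z = mul x (mul one z) := by
    intro x z; rw [honeR, honeL]
  have Tone3 : ∀ x y : A, mul (mul x y) one = mul x (mul y one) := by
    intro x y; rw [honeR, honeR]
  -- closure of the associativity relation under linear operations in each slot
  have Padd1 : ∀ x1 x2 y z : A, mul (mul x1 y) z = mul x1 (mul y z) →
      mul (mul x2 y) z = mul x2 (mul y z) →
      mul (mul (x1 + x2) y) z = mul (x1 + x2) (mul y z) := by
    intro x1 x2 y z h1 h2
    simp only [map_add, LinearMap.add_apply]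
    rw [h1, h2]
  have Psmul1 : ∀ (c : K) (x y z : A), mul (mul x y) z = mul x (mul y z) →
      mul (mul (c • x) y) z = mul (c • x) (mul y z) := by
    intro c x y z h
    simp only [map_smul, LinearMap.smul_apply]
    rw [h]
  have Padd2 : ∀ x y1 y2 z : A, mul (mul x y1) z = mul x (mul y1 z) →
      mul (mul x y2) z = mul x (mul y2 z) →
      mul (mul x (y1 + y2)) z = mul x (mul (y1 + y2) z) := by
    intro x y1 y2 z h1 h2
    simp only [map_add, LinearMap.add_apply]
    rw [h1, h2]
  have Psmul2 : ∀ (c : K) (x y z : A), mul (mul x y) z = mul x (mul y z) →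
      mul (mul x (c • y)) z = mul x (mul (c • y) z) := by
    intro c x y z h
    simp only [map_smul, LinearMap.smul_apply]
    rw [h]
  have Padd3 : ∀ x y z1 z2 : A, mul (mul x y) z1 = mul x (mul y z1) →
      mul (mul x y) z2 = mul x (mul y z2) →
      mul (mul x y) (z1 + z2) = mul x (mul y (z1 + z2)) := by
    intro x y z1 z2 h1 h2
    simp only [map_add, LinearMap.add_apply]
    rw [h1, h2]
  have Psmul3 : ∀ (c : K) (x y z : A), mul (mul x y) z = mul x (mul y z) →
      mul (mul x y) (c • z) = mul x (mul y (c • z)) := by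
    intro c x y z h
    simp only [map_smul, LinearMap.smul_apply]
    rw [h]
  by_cases hmem : one ∈ LinearMap.range α
  · -- the unit is in the range of α : then multiplication by α(one) is invertible
    obtain ⟨b, hb⟩ := hmem
    intro x y z
    have k : ∀ t : A, mul (α one) (mul b t) = t := by
      intro t
      rw [central b t, ← hα b, hb, honeL]
    calc mul (mul x y) z
        = mul (α one) (mul b (mul (mul x y) z)) := (k _).symm
      _ = mul b (mul (α one) (mul (mul x y) z)) := slide b _
      _ = mul b (mul (α one) (mul x (mul y z))) := by rw [aT x y z]
      _ = mul (α one) (mul b (mul x (mul y z))) := (slide b _).symm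
      _ = mul x (mul y z) := k _
  · -- the unit is not in the range of α
    have he : (LinearMap.range α).mkQ one ≠ 0 := by
      rw [Ne, Submodule.mkQ_apply, Submodule.Quotient.mk_eq_zero]
      exact hmem
    have main : ∀ w x y z : A,
        (LinearMap.range α).mkQ x ∈
          Submodule.span K {(LinearMap.range α).mkQ one, (LinearMap.range α).mkQ w} →
        (LinearMap.range α).mkQ y ∈
          Submodule.span K {(LinearMap.range α).mkQ one, (LinearMap.range α).mkQ w} →
        (LinearMap.range α).mkQ z ∈
          Submodule.span K {(LinearMap.range α).mkQ one, (LinearMap.range α).mkQ w} →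
        mul (mul x y) z = mul x (mul y z) := by
      intro w x y z hx hy hz
      have decomp : ∀ v : A,
          (LinearMap.range α).mkQ v ∈
            Submodule.span K {(LinearMap.range α).mkQ one, (LinearMap.range α).mkQ w} →
          ∃ (p q : K) (i : A), v = p • one + q • w + α i := by
        intro v hv
        obtain ⟨p, q, hpq⟩ := Submodule.mem_span_pair.mp hv
        have h0 : (LinearMap.range α).mkQ (v - (p • one + q • w)) = 0 := by
          rw [map_sub, map_add, map_smul, map_smul, hpq]  -- may need adjustment
          abel
        rw [Submodule.mkQ_apply, Submodule.Quotient.mk_eq_zero] at h0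
        obtain ⟨i, hi⟩ := h0
        exact ⟨p, q, i, by rw [hi]; abel⟩
      obtain ⟨p, q, ix, hx'⟩ := decomp x hx
      obtain ⟨r, s, iy, hy'⟩ := decomp y hy
      obtain ⟨t, u, iz, hz'⟩ := decomp z hz
      have gen : ∀ e1 e2 e3 : A,
          (e1 = one ∨ e1 = w ∨ ∃ i, e1 = α i) →
          (e2 = one ∨ e2 = w ∨ ∃ i, e2 = α i) →
          (e3 = one ∨ e3 = w ∨ ∃ i, e3 = α i) →
          mul (mul e1 e2) e3 = mul e1 (mul e2 e3) := by
        rintro e1 e2 e3 (rfl | rfl | ⟨i, rfl⟩) h2 h3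
        · exact Tone1 _ _
        · rcases h2 with rfl | rfl | ⟨j, rfl⟩
          · exact Tone2 _ _
          · rcases h3 with rfl | rfl | ⟨l, rfl⟩
            · exact Tone3 _ _
            · exact hcomm _ _
            · exact Trange3 _ _ _
          · exact Trange2 _ _ _
        · exact Trange1 _ _ _
      have L1 : ∀ e2 e3 : A,
          (e2 = one ∨ e2 = w ∨ ∃ i, e2 = α i) →
          (e3 = one ∨ e3 = w ∨ ∃ i, e3 = α i) →
          mul (mul x e2) e3 = mul x (mul e2 e3) := by
        intro e2 e3 h2 h3
        rw [hx']
        exact Padd1 _ _ _ _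
          (Padd1 _ _ _ _ (Psmul1 p one e2 e3 (gen _ _ _ (Or.inl rfl) h2 h3))
            (Psmul1 q w e2 e3 (gen _ _ _ (Or.inr (Or.inl rfl)) h2 h3)))
          (gen _ _ _ (Or.inr (Or.inr ⟨ix, rfl⟩)) h2 h3)
      have L2 : ∀ e3 : A,
          (e3 = one ∨ e3 = w ∨ ∃ i, e3 = α i) →
          mul (mul x y) e3 = mul x (mul y e3) := by
        intro e3 h3
        rw [hy']
        exact Padd2 _ _ _ _
          (Padd2 _ _ _ _ (Psmul2 r x one e3 (L1 one e3 (Or.inl rfl) h3))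
            (Psmul2 s x w e3 (L1 w e3 (Or.inr (Or.inl rfl)) h3)))
          (L1 (α iy) e3 (Or.inr (Or.inr ⟨iy, rfl⟩)) h3)
      rw [hz']
      exact Padd3 _ _ _ _
        (Padd3 _ _ _ _ (Psmul3 t x y one (L2 one (Or.inl rfl)))
          (Psmul3 u x y w (L2 w (Or.inr (Or.inl rfl)))))
        (L2 (α iz) (Or.inr (Or.inr ⟨iz, rfl⟩)))
    intro x y z
    have pairself : ∀ w : A, (LinearMap.range α).mkQ w ∈
        Submodule.span K {(LinearMap.range α).mkQ one, (LinearMap.range α).mkQ w} :=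
      fun w => Submodule.subset_span (Set.mem_insert_iff.mpr (Or.inr rfl))
    have single_to_pair : ∀ v w : A,
        (LinearMap.range α).mkQ v ∈ Submodule.span K {(LinearMap.range α).mkQ one} →
        (LinearMap.range α).mkQ v ∈
          Submodule.span K {(LinearMap.range α).mkQ one, (LinearMap.range α).mkQ w} :=
      fun v w hv => Submodule.span_mono
        (Set.singleton_subset_iff.mpr (Set.mem_insert _ _)) hv
    have helper : ∀ w v : A,
        (LinearMap.range α).mkQ w ∉ Submodule.span K {(LinearMap.range α).mkQ one} →
        (LinearMap.range α).mkQ v ∈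
          Submodule.span K {(LinearMap.range α).mkQ one, (LinearMap.range α).mkQ w} :=
      fun w v hw => mem_span_pair_of_rank_le_two_aux hcodim _ _ _ he hw
    by_cases hx : (LinearMap.range α).mkQ x ∈ Submodule.span K {(LinearMap.range α).mkQ one}
    · by_cases hy : (LinearMap.range α).mkQ y ∈
          Submodule.span K {(LinearMap.range α).mkQ one}
      · by_cases hz : (LinearMap.range α).mkQ z ∈
            Submodule.span K {(LinearMap.range α).mkQ one}
        · exact main one x y z (single_to_pair x one hx) (single_to_pair y one hy)
            (single_to_pair z one hz)
        · exact main z x y z (helper z x hz) (helper z y hz) (pairself z)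
      · exact main y x y z (helper y x hy) (pairself y) (helper y z hy)
    · exact main x x y z (pairself x) (helper x y hx) (helper x z hx)
end

section
/- Let (A, ⋆, α, 1) be a unital hom-associative algebra over a field K such that α restricted to Im(α) is injective. If the codimension of Im(α) as a K-vector subspace of A is at most 2, then the multiplication ⋆ is associative. -/
/-- Prop (codim 2, `α` injective on its image): a unital hom-associative algebra
over a field `K` whose twisting map `α` is injective on `Im(α)` and whose image has
codimension at most `2` is associative. -/
theorem unital_homAssoc_injOn_image_codim_le_two_implies_associative
    {K A : Type*} [Field K] [AddCommGroup A] [Module K A]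
    (mul : A →ₗ[K] A →ₗ[K] A) (α : A →ₗ[K] A) (one : A)
    (hom : ∀ x y z : A, mul (α x) (mul y z) = mul (mul x y) (α z))
    (hone : ∀ x : A, mul one x = x ∧ mul x one = x)
    (hinj : Set.InjOn α (LinearMap.range α : Set A))
    (hcodim : Module.rank K (A ⧸ LinearMap.range α) ≤ 2) :
    ∀ x y z : A, mul (mul x y) z = mul x (mul y z) := by
  have h1l : ∀ x : A, mul one x = x := fun x => (hone x).1
  have h1r : ∀ x : A, mul x one = x := fun x => (hone x).2
  -- `mul x (α one) = α x`
  have he2 : ∀ x : A, mul x (α one) = α x := by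
    intro x
    have h := hom x one one
    rw [h1l one, h1r (α x), h1r x] at h
    exact h.symm
  -- `mul (α x) y = mul x (α y)`
  have hmulα : ∀ x y : A, mul (α x) y = mul x (α y) := by
    intro x y
    have h := hom x one y
    rwa [h1l y, h1r x] at h
  -- `mul (α x) y = α (mul x y)`
  have hL : ∀ x y : A, mul (α x) y = α (mul x y) := by
    intro x y
    have h := hom x y one
    rwa [h1r y, he2 (mul x y)] at h
  -- `mul x (α y) = α (mul x y)`
  have hRm : ∀ x y : A, mul x (α y) = α (mul x y) := by
    intro x y
    rw [← hmulα, hL]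
  -- α kills all associators
  have hαD : ∀ x y z : A, α (mul (mul x y) z - mul x (mul y z)) = 0 := by
    intro x y z
    rw [map_sub, ← hRm (mul x y) z, ← hom, hL, sub_self]
  set R := LinearMap.range α with hRdef
  -- an element of the range of α killed by α is zero
  have hker : ∀ w : A, w ∈ R → α w = 0 → w = 0 := by
    intro w hw h0
    have h0' : α w = α 0 := by rw [h0, map_zero]
    exact hinj hw ⟨0, map_zero α⟩ h0'
  -- associators with a slot in the range of α lie in the range of α
  have hDα1 : ∀ r y z : A, mul (mul (α r) y) z - mul (α r) (mul y z) ∈ R := by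
    intro r y z
    refine ⟨mul (mul r y) z - mul r (mul y z), ?_⟩
    rw [map_sub, hL r y, hL (mul r y) z, hL r (mul y z)]
  have hDα2 : ∀ x r z : A, mul (mul x (α r)) z - mul x (mul (α r) z) ∈ R := by
    intro x r z
    refine ⟨mul (mul x r) z - mul x (mul r z), ?_⟩
    rw [map_sub, hRm x r, hL (mul x r) z, hL r z, hRm x (mul r z)]
  have hDα3 : ∀ x y r : A, mul (mul x y) (α r) - mul x (mul y (α r)) ∈ R := by
    intro x y r
    refine ⟨mul (mul x y) r - mul x (mul y r), ?_⟩
    rw [map_sub, hRm (mul x y) r, hRm y r, hRm x (mul y r)]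
  -- associators with `one` in a slot vanish
  have hD1 : ∀ y z : A, mul (mul one y) z - mul one (mul y z) = 0 := by
    intro y z; rw [h1l, h1l, sub_self]
  have hD2 : ∀ x z : A, mul (mul x one) z - mul x (mul one z) = 0 := by
    intro x z; rw [h1r, h1l, sub_self]
  have hD3 : ∀ x y : A, mul (mul x y) one - mul x (mul y one) = 0 := by
    intro x y; rw [h1r, h1r, sub_self]
  -- find `v` such that `A = K·one + K·v + R`
  obtain ⟨v, hv⟩ : ∃ v : A, ∀ x : A, ∃ (c d : K) (r : A),
      x = c • one + d • v + α r := by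
    by_cases h1m : one ∈ R
    · obtain ⟨c0, hc0⟩ := h1m
      refine ⟨0, fun x => ⟨0, 0, mul c0 x, ?_⟩⟩
      have hx : mul (α c0) x = x := by rw [hc0, h1l]
      rw [hL c0 x] at hx
      simp [hx]
    · haveI : Module.Finite K (A ⧸ R) := by
        rw [← Module.rank_lt_aleph0_iff]
        refine hcodim.trans_lt ?_
        exact_mod_cast Cardinal.nat_lt_aleph0 2
      have hfr : Module.finrank K (A ⧸ R) ≤ 2 := by
        apply Module.finrank_le_of_rank_le
        exact_mod_cast hcodim
      have hπ1 : R.mkQ one ≠ 0 := by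
        simpa [Submodule.Quotient.mk_eq_zero] using h1m
      set T : Submodule K (A ⧸ R) := Submodule.span K {R.mkQ one} with hTdef
      have hT1 : Module.finrank K T = 1 := finrank_span_singleton hπ1
      have hq : Module.finrank K ((A ⧸ R) ⧸ T) + 1 = Module.finrank K (A ⧸ R) := by
        rw [← hT1]; exact T.finrank_quotient_add_finrank
      have hq1 : Module.finrank K ((A ⧸ R) ⧸ T) ≤ 1 := by omega
      obtain ⟨g, hg⟩ := finrank_le_one_iff.mp hq1
      obtain ⟨vq, hvq⟩ := T.mkQ_surjective g
      obtain ⟨v, hvv⟩ := R.mkQ_surjective vq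
      refine ⟨v, fun x => ?_⟩
      obtain ⟨d, hd⟩ := hg (T.mkQ (R.mkQ x))
      have hmemT : R.mkQ x - d • R.mkQ v ∈ T := by
        rw [← Submodule.Quotient.mk_eq_zero T]
        have : T.mkQ (R.mkQ x - d • R.mkQ v) = 0 := by
          rw [map_sub, map_smul, hvv, hvq, hd, sub_self]
        simpa using this
      obtain ⟨c, hc⟩ := Submodule.mem_span_singleton.mp hmemT
      have hmemR : x - c • one - d • v ∈ R := by
        rw [← Submodule.Quotient.mk_eq_zero R]
        have : R.mkQ (x - c • one - d • v) = 0 := by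
          rw [map_sub, map_sub, map_smul, map_smul, hc]
          abel
        simpa using this
      obtain ⟨r, hr⟩ := hmemR
      exact ⟨c, d, r, by rw [hr]; abel⟩
  -- expansion lemmas for each slot
  have hexp3 : ∀ (x y : A) (c d : K) (r : A),
      mul (mul x y) (c • one + d • v + α r) - mul x (mul y (c • one + d • v + α r)) =
      c • (mul (mul x y) one - mul x (mul y one)) +
      d • (mul (mul x y) v - mul x (mul y v)) +
      (mul (mul x y) (α r) - mul x (mul y (α r))) := by
    intro x y c d r
    simp only [map_add, map_smul, smul_sub]
    abel
  have hexp2 : ∀ (x z : A) (c d : K) (r : A),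
      mul (mul x (c • one + d • v + α r)) z - mul x (mul (c • one + d • v + α r) z) =
      c • (mul (mul x one) z - mul x (mul one z)) +
      d • (mul (mul x v) z - mul x (mul v z)) +
      (mul (mul x (α r)) z - mul x (mul (α r) z)) := by
    intro x z c d r
    simp only [map_add, map_smul, LinearMap.add_apply, LinearMap.smul_apply, smul_sub]
    abel
  have hexp1 : ∀ (y z : A) (c d : K) (r : A),
      mul (mul (c • one + d • v + α r) y) z - mul (c • one + d • v + α r) (mul y z) =
      c • (mul (mul one y) z - mul one (mul y z)) +
      d • (mul (mul v y) z - mul v (mul y z)) +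
      (mul (mul (α r) y) z - mul (α r) (mul y z)) := by
    intro y z c d r
    simp only [map_add, map_smul, LinearMap.add_apply, LinearMap.smul_apply, smul_sub]
    abel
  -- the associator of (v, v, v) lies in R
  have hvvv : mul (mul v v) v - mul v (mul v v) ∈ R := by
    obtain ⟨c, d, r, hm⟩ := hv (mul v v)
    rw [hm]
    have : mul (c • one + d • v + α r) v - mul v (c • one + d • v + α r) =
        α (mul r v - mul v r) := by
      simp only [map_add, map_smul, LinearMap.add_apply, LinearMap.smul_apply,
        h1l v, h1r v, hL r v, hRm v r, map_sub]
      abel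
    rw [this]
    exact ⟨_, rfl⟩
  -- slot 3: associators (v, v, z) lie in R
  have S3 : ∀ z : A, mul (mul v v) z - mul v (mul v z) ∈ R := by
    intro z
    obtain ⟨c, d, r, hz⟩ := hv z
    rw [hz, hexp3]
    rw [hD3 v v, smul_zero, zero_add]
    exact R.add_mem (R.smul_mem d hvvv) (hDα3 v v r)
  -- slot 2: associators (v, y, z) lie in R
  have S2 : ∀ y z : A, mul (mul v y) z - mul v (mul y z) ∈ R := by
    intro y z
    obtain ⟨c, d, r, hy⟩ := hv y
    rw [hy, hexp2]
    rw [hD2 v z, smul_zero, zero_add]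
    exact R.add_mem (R.smul_mem d (S3 z)) (hDα2 v r z)
  -- slot 1: all associators lie in R
  have S1 : ∀ x y z : A, mul (mul x y) z - mul x (mul y z) ∈ R := by
    intro x y z
    obtain ⟨c, d, r, hx⟩ := hv x
    rw [hx, hexp1]
    rw [hD1 y z, smul_zero, zero_add]
    exact R.add_mem (R.smul_mem d (S2 y z)) (hDα1 r y z)
  intro x y z
  exact sub_eq_zero.mp (hker _ (S1 x y z) (hαD x y z))
end

section
/- Let k be a commutative ring and (A, ⋆, 1) a unital k-algebra (not necessarily associative). Suppose a ∈ A satisfies: (1) a ⋆ x = x ⋆ a for all x ∈ A; and (2) every element of the set A ⋆ a = {x ⋆ a : x ∈ A} associates with all elements of A in every position, i.e., for all m ∈ A ⋆ a and all y, z ∈ A one has m ⋆ (y ⋆ z) = (m ⋆ y) ⋆ z, y ⋆ (m ⋆ z) = (y ⋆ m) ⋆ z, and y ⋆ (z ⋆ m) = (y ⋆ z) ⋆ m, and A ⋆ a is stable under left and right multiplication by elements of A. Then the map α defined by α(x) = a ⋆ x makes (A, ⋆, α, 1) a unital hom-associative algebra, i.e., α(x) ⋆ (y ⋆ z) = (x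 ⋆ y) ⋆ α(z) for all x, y, z ∈ A. -/
/-- If `(A, ⋆, 1)` is a unital (not necessarily associative) algebra over a commutative
ring `k` and `a ∈ A` is central such that the set `A ⋆ a` is a two-sided ideal all of
whose elements associate with all elements of `A` in every position, then
`α(x) := a ⋆ x` makes `(A, ⋆, α, 1)` a hom-associative algebra. -/
theorem central_assoc_element_gives_twisting
    {k A : Type*} [CommRing k] [AddCommGroup A] [Module k A]
    (mul : A →ₗ[k] A →ₗ[k] A) (one : A)
    (hone : ∀ x : A, mul one x = x ∧ mul x one = x)
    (a : A)
    (hcentral : ∀ x : A, mul a x = mul x a)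
    (hassoc : ∀ m ∈ {m : A | ∃ x : A, mul x a = m}, ∀ y z : A,
        mul m (mul y z) = mul (mul m y) z ∧
        mul y (mul m z) = mul (mul y m) z ∧
        mul y (mul z m) = mul (mul y z) m)
    (hideal : ∀ m ∈ {m : A | ∃ x : A, mul x a = m}, ∀ y : A,
        mul y m ∈ {m : A | ∃ x : A, mul x a = m} ∧
        mul m y ∈ {m : A | ∃ x : A, mul x a = m}) :
    ∀ x y z : A, mul (mul a x) (mul y z) = mul (mul x y) (mul a z) := by
  intro x y z
  have ha : a ∈ {m : A | ∃ x : A, mul x a = m} := ⟨one, (hone a).1⟩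
  have hax : mul a x ∈ {m : A | ∃ x : A, mul x a = m} := ⟨x, (hcentral x).symm⟩
  -- LHS = ((a⋆x)⋆y)⋆z
  rw [(hassoc _ hax y z).1]
  -- (a⋆x)⋆y = x⋆(a⋆y) ... use central & assoc
  have h1 : mul (mul a x) y = mul (mul x y) a := by
    rw [hcentral x, ← (hassoc a ha x y).2.1, hcentral y, (hassoc a ha x y).2.2]
  rw [h1, ← (hassoc a ha (mul x y) z).2.1]
end

section
/- Let k be a commutative ring and (A, ⋆, 1) a unital k-algebra (not necessarily associative). Define Twist(A) as the set of k-linear maps α : A → A such that α(x) ⋆ (y ⋆ z) = (x ⋆ y) ⋆ α(z) for all x, y, z ∈ A, and define AC(A) as the set of a ∈ A such that a ⋆ x = x ⋆ a for all x ∈ A, the set A ⋆ a is stable under left and right multiplication by elements of A, and every element of A ⋆ a associates with all elements of A in every position. Then the maps Φ : Twist(A) → AC(A), Φ(α) = α(1), and Ψ : AC(A) → Twist(A), Ψ(a)(x) = a ⋆ x, are well-defined and mutually inverse bijections; moreover Φ(α₁ ∘ α₂) = Φ(α₁) ⋆ Φ(α₂) for all α₁, α₂ ∈ Twist(A). -/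
/-- Prop (structure of twisting maps): for a unital (not necessarily associative)
algebra `(A, ⋆, 1)` over a commutative ring `k`, the maps `Φ(α) = α(1)` and
`Ψ(a)(x) = a ⋆ x` are well-defined mutually inverse bijections between the set
`Twist(A)` of compatible twisting maps and the set `AC(A)` of central elements `a`
such that `A ⋆ a` is an ideal all of whose elements associate with everything;
moreover `Φ(α₁ ∘ α₂) = Φ(α₁) ⋆ Φ(α₂)`. -/
theorem twisting_maps_correspondence
    {k A : Type*} [CommRing k] [AddCommGroup A] [Module k A]
    (mul : A →ₗ[k] A →ₗ[k] A) (one : A)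
    (hone : ∀ x : A, mul one x = x ∧ mul x one = x)
    (Twist : Set (A →ₗ[k] A))
    (hTwist : Twist = {α | ∀ x y z : A, mul (α x) (mul y z) = mul (mul x y) (α z)})
    (AC : Set A)
    (hAC : AC = {a |
      (∀ x : A, mul a x = mul x a) ∧
      (∀ m ∈ {m : A | ∃ x : A, mul x a = m}, ∀ y : A,
          mul y m ∈ {m : A | ∃ x : A, mul x a = m} ∧
          mul m y ∈ {m : A | ∃ x : A, mul x a = m}) ∧
      (∀ m ∈ {m : A | ∃ x : A, mul x a = m}, ∀ y z : A,
          mul m (mul y z) = mul (mul m y) z ∧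
          mul y (mul m z) = mul (mul y m) z ∧
          mul y (mul z m) = mul (mul y z) m)}) :
    (∀ α ∈ Twist, α one ∈ AC) ∧
    (∀ a ∈ AC, mul a ∈ Twist) ∧
    (∀ α ∈ Twist, mul (α one) = α) ∧
    (∀ a ∈ AC, mul a one = a) ∧
    (∀ α₁ ∈ Twist, ∀ α₂ ∈ Twist, (α₁ ∘ₗ α₂) one = mul (α₁ one) (α₂ one)) := by
  subst hTwist hAC
  have h1 : ∀ x : A, mul one x = x := fun x => (hone x).1
  have h2 : ∀ x : A, mul x one = x := fun x => (hone x).2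
  -- For α ∈ Twist, α = mul (α one)
  have hrep : ∀ α : A →ₗ[k] A,
      (∀ x y z : A, mul (α x) (mul y z) = mul (mul x y) (α z)) →
      ∀ z : A, mul (α one) z = α z := by
    intro α hα z
    have := hα one one z
    simpa [h1, h2] using this
  have hcent : ∀ α : A →ₗ[k] A,
      (∀ x y z : A, mul (α x) (mul y z) = mul (mul x y) (α z)) →
      ∀ x : A, mul (α one) x = mul x (α one) := by
    intro α hα x
    have := hα x one one
    simp only [h1, h2] at this
    rw [hrep α hα x]; exact this
  -- α one pulls out of products on either side
  have hP1 : ∀ α : A →ₗ[k] A,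
      (∀ x y z : A, mul (α x) (mul y z) = mul (mul x y) (α z)) →
      ∀ u v : A, mul (mul (α one) u) v = mul (α one) (mul u v) := by
    intro α hα u v
    have := hα u v one
    simp only [h2] at this
    rw [hrep α hα u, this]
    exact (hcent α hα (mul u v)).symm
  have hP2 : ∀ α : A →ₗ[k] A,
      (∀ x y z : A, mul (α x) (mul y z) = mul (mul x y) (α z)) →
      ∀ u v : A, mul u (mul (α one) v) = mul (α one) (mul u v) := by
    intro α hα u v
    have := hα one u v
    simp only [h1] at this
    rw [hrep α hα v]
    exact this.symm
  have hP3 : ∀ α : A →ₗ[k] A,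
      (∀ x y z : A, mul (α x) (mul y z) = mul (mul x y) (α z)) →
      ∀ x y z : A,
        mul (α one) (mul x (mul y z)) = mul (α one) (mul (mul x y) z) := by
    intro α hα x y z
    rw [← hP1 α hα x (mul y z), hrep α hα x, hα x y z, ← hrep α hα z,
      hP2 α hα (mul x y) z]
  constructor
  · -- Φ well-defined
    intro α hα
    simp only [Set.mem_setOf_eq] at hα ⊢
    refine ⟨hcent α hα, ?_, ?_⟩
    · rintro m ⟨x', hx'⟩ y
      have hm : m = mul (α one) x' := by rw [← hx']; exact (hcent α hα x').symm
      subst hm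
      constructor
      · exact ⟨mul y x', by rw [hP2 α hα y x', ← hcent α hα (mul y x')]⟩
      · exact ⟨mul x' y, by rw [hP1 α hα x' y, ← hcent α hα (mul x' y)]⟩
    · rintro m ⟨x', hx'⟩ y z
      have hm : m = mul (α one) x' := by rw [← hx']; exact (hcent α hα x').symm
      subst hm
      refine ⟨?_, ?_, ?_⟩
      · rw [hP1 α hα x' (mul y z), hP3 α hα x' y z, hP1 α hα x' y,
          hP1 α hα (mul x' y) z]
      · rw [hP1 α hα x' z, hP2 α hα y (mul x' z), hP3 α hα y x' z,
          hP2 α hα y x', hP1 α hα (mul y x') z]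
      · rw [hP2 α hα z x', hP2 α hα y (mul z x'), hP3 α hα y z x',
          hP2 α hα (mul y z) x']
  refine ⟨?_, ?_, ?_, ?_⟩
  · -- Ψ well-defined
    intro a haAC
    simp only [Set.mem_setOf_eq] at haAC ⊢
    obtain ⟨hc, _, has⟩ := haAC
    have haS : a ∈ {m : A | ∃ x : A, mul x a = m} := ⟨one, h1 a⟩
    have hA2 : ∀ y z : A, mul y (mul a z) = mul (mul y a) z := fun y z => (has a haS y z).2.1
    have hA3 : ∀ y z : A, mul y (mul z a) = mul (mul y z) a := fun y z => (has a haS y z).2.2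
    intro x y z
    have hmS : mul a x ∈ {m : A | ∃ x' : A, mul x' a = m} := ⟨x, (hc x).symm⟩
    have step1 : mul (mul a x) (mul y z) = mul (mul (mul a x) y) z :=
      (has (mul a x) hmS y z).1
    have step2 : mul (mul a x) y = mul (mul x y) a := by
      rw [hc x, ← hA2 x y, hc y, hA3 x y]
    rw [step1, step2, ← hA2 (mul x y) z]
  · -- Ψ ∘ Φ = id
    intro α hα
    simp only [Set.mem_setOf_eq] at hα
    exact LinearMap.ext (hrep α hα)
  · intro a _
    exact h2 a
  · intro α₁ hα₁ α₂ hα₂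
    simp only [Set.mem_setOf_eq] at hα₁ hα₂
    have : (α₁ ∘ₗ α₂) one = α₁ (α₂ one) := rfl
    rw [this, ← hrep α₁ hα₁ (α₂ one)]
end

section
/- Let K be a field and let A = K² with multiplication (λ₁, λ₂) ⋆ (μ₁, μ₂) = (0, λ₁μ₁) and K-linear map α(λ, μ) = (λ + μ, μ). Then there is no left weakly unital hom-associative K-algebra (B, ∙, β, c) (i.e., β(x) = c ∙ x for all x ∈ B) together with an injective K-linear map φ : A → B satisfying φ(x ⋆ y) = φ(x) ∙ φ(y) for all x, y ∈ A and φ ∘ α = β ∘ φ. -/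
/-- The hom-associative algebra `A = K²` with `(λ₁,λ₂) ⋆ (μ₁,μ₂) = (0, λ₁μ₁)` and
`α(λ,μ) = (λ+μ, μ)` cannot be embedded into any left weakly unital hom-associative
`K`-algebra `(B, ∙, β, c)`. -/
theorem no_embedding_into_weakly_unital
    (K : Type*) [Field K]
    (star : K × K → K × K → K × K) (α : K × K → K × K)
    (hstar : star = fun p q => ((0 : K), p.1 * q.1))
    (hα : α = fun p => (p.1 + p.2, p.2)) :
    ∀ (B : Type*) [AddCommGroup B] [Module K B]
      (mulB : B →ₗ[K] B →ₗ[K] B) (β : B →ₗ[K] B) (c : B),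
      (∀ x y z : B, mulB (β x) (mulB y z) = mulB (mulB x y) (β z)) →
      (∀ x : B, β x = mulB c x) →
      ∀ φ : (K × K) →ₗ[K] B,
        Function.Injective φ →
        (∀ x y : K × K, φ (star x y) = mulB (φ x) (φ y)) →
        (∀ x : K × K, φ (α x) = β (φ x)) →
        False := by
  intro B _ _ mulB β c hassoc hunit φ hinj hmul hcomm
  set e1 : K × K := (1, 0) with he1
  set e2 : K × K := (0, 1) with he2
  have ha : β (φ e1) = φ e1 := by
    rw [← hcomm]
    congr 1
    simp [hα, he1]
  have hb : β (φ e2) = φ e1 + φ e2 := by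
    rw [← hcomm, ← map_add]
    congr 1
    simp [hα, he1, he2, Prod.ext_iff]
  have h12 : mulB (φ e1) (φ e2) = 0 := by
    rw [← hmul]
    have : star e1 e2 = 0 := by simp [hstar, he1, he2, Prod.ext_iff]
    rw [this, map_zero]
  have h11 : mulB (φ e1) (φ e1) = φ e2 := by
    rw [← hmul]
    congr 1
    simp [hstar, he1, he2]
  have key := hassoc c (φ e1) (φ e2)
  rw [h12, ← hunit, ha, hb, map_add, h11, h12, map_zero, add_zero] at key
  have : φ e2 = φ 0 := by rw [map_zero, ← key]
  have := hinj this
  simp [he2, Prod.ext_iff] at this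
end

section
/- Let (A, ⋆, α, c) be a left weakly unital hom-associative algebra over a commutative ring k with α bijective, where c is a weak left unit (α(x) = c ⋆ x for all x ∈ A). Then (c ⋆ x) ⋆ y = (x ⋆ c) ⋆ y for all x, y ∈ A. -/
/-- In a left weakly unital hom-associative algebra with bijective twisting map,
the weak left unit `c` satisfies `(c ⋆ x) ⋆ y = (x ⋆ c) ⋆ y`. -/
theorem weak_left_unit_symmetry
    {k A : Type*} [CommRing k] [AddCommGroup A] [Module k A]
    (mul : A →ₗ[k] A →ₗ[k] A) (α : A →ₗ[k] A)
    (hom : ∀ x y z : A, mul (α x) (mul y z) = mul (mul x y) (α z))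
    (hbij : Function.Bijective α)
    (c : A) (hc : ∀ x : A, α x = mul c x) :
    ∀ x y : A, mul (mul c x) y = mul (mul x c) y := by
  intro x y
  obtain ⟨z, rfl⟩ := hbij.surjective y
  rw [← hc x, ← hom, hc z]
end

section
/- Let (A, ⋆, α, c) be a left weakly unital hom-associative algebra over a commutative ring k with α bijective (α(x) = c ⋆ x for all x ∈ A), and set β := α⁻¹. Then β(x) ⋆ β(y) = β(c) ⋆ β(β(x ⋆ y)) for all x, y ∈ A. -/
/-- In a left weakly unital hom-associative algebra with bijective twisting map `α`
and `β := α⁻¹`, one has `β(x) ⋆ β(y) = β(c) ⋆ β(β(x ⋆ y))`. -/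
theorem weakly_unital_product_rule
    {k A : Type*} [CommRing k] [AddCommGroup A] [Module k A]
    (mul : A →ₗ[k] A →ₗ[k] A) (α β : A →ₗ[k] A)
    (hom : ∀ x y z : A, mul (α x) (mul y z) = mul (mul x y) (α z))
    (hβα : ∀ x : A, β (α x) = x) (hαβ : ∀ x : A, α (β x) = x)
    (c : A) (hc : ∀ x : A, α x = mul c x) :
    ∀ x y : A, mul (β x) (β y) = mul (β c) (β (β (mul x y))) := by
  intro x y
  have hαe : α (β c) = c := hαβ c
  -- key lemma: β u ⋆ β v = β (β ((e ⋆ (e ⋆ β u)) ⋆ α v)) with e = β c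
  have step : ∀ u v : A,
      mul (β u) (β v) = β (β (mul (mul (β c) (mul (β c) (β u))) (α v))) := by
    intro u v
    have a1 : α (mul (β u) (β v)) = mul (mul (β c) (β u)) v := by
      calc α (mul (β u) (β v)) = mul c (mul (β u) (β v)) := hc _
        _ = mul (α (β c)) (mul (β u) (β v)) := by rw [hαe]
        _ = mul (mul (β c) (β u)) (α (β v)) := hom _ _ _
        _ = mul (mul (β c) (β u)) v := by rw [hαβ]
    have a2 : α (α (mul (β u) (β v)))
        = mul (mul (β c) (mul (β c) (β u))) (α v) := by
      rw [a1]
      calc α (mul (mul (β c) (β u)) v)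
          = mul c (mul (mul (β c) (β u)) v) := hc _
        _ = mul (α (β c)) (mul (mul (β c) (β u)) v) := by rw [hαe]
        _ = mul (mul (β c) (mul (β c) (β u))) (α v) := hom _ _ _
    calc mul (β u) (β v) = β (β (α (α (mul (β u) (β v))))) := by
            rw [hβα, hβα]
      _ = β (β (mul (mul (β c) (mul (β c) (β u))) (α v))) := by rw [a2]
  -- e ⋆ (e ⋆ β x) = (f ⋆ e) ⋆ x  with f = β (β c)
  have e1 : mul (β c) (mul (β c) (β x)) = mul (mul (β (β c)) (β c)) x := by
    have h := hom (β (β c)) (β c) (β x)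
    rw [hαβ, hαβ] at h
    exact h
  -- e ⋆ (e ⋆ e) = (f ⋆ e) ⋆ c
  have e3 : mul (β c) (mul (β c) (β c)) = mul (mul (β (β c)) (β c)) c := by
    have h := hom (β (β c)) (β c) (β c)
    rw [hαβ, hαe] at h
    exact h
  -- ((f⋆e)⋆x)⋆αy = α(f⋆e)⋆(x⋆y)
  have e2 : mul (mul (mul (β (β c)) (β c)) x) (α y)
      = mul (α (mul (β (β c)) (β c))) (mul x y) := (hom _ _ _).symm
  -- α(f⋆e)⋆(x⋆y) = ((f⋆e)⋆c)⋆(x⋆y)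
  have e4 : mul (α (mul (β (β c)) (β c))) (mul x y)
      = mul (mul (mul (β (β c)) (β c)) c) (mul x y) := by
    have h := hom (mul (β (β c)) (β c)) c (β (mul x y))
    rw [hαβ, ← hc, hαβ] at h
    exact h
  have core : mul (mul (β c) (mul (β c) (β x))) (α y)
      = mul (mul (β c) (mul (β c) (β c))) (mul x y) := by
    rw [e1, e2, e4, ← e3]
  have rhs := step c (β (mul x y))
  rw [hαβ] at rhs
  rw [step x y, core, rhs]
end

section
/- Let (A, ⋆, α, c) be a left weakly unital hom-associative algebra over a commutative ring k with α bijective (α(x) = c ⋆ x for all x ∈ A), and set β := α⁻¹. Then x ⋆ β(y ⋆ z) = β(x ⋆ y) ⋆ z for all x, y, z ∈ A. Consequently, defining x · y := β(x ⋆ y), the multiplication · is associative, c is a left unit for · (c · x = x for all x), and x ⋆ y = α(x · y) for all x, y ∈ A; that is, (A, ⋆, α, c) arises from the left unital associative algebra (A, ·, c) by twisting with α. -/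
/-- Main theorem: let `(A, ⋆, α, c)` be a left weakly unital hom-associative algebra
with bijective twisting map `α` and `β := α⁻¹`. Then `x ⋆ β(y ⋆ z) = β(x ⋆ y) ⋆ z`;
consequently `x · y := β(x ⋆ y)` is an associative multiplication, `c` is a left unit
for `·`, and `x ⋆ y = α(x · y)`, so `(A, ⋆, α, c)` is a twisting of the left unital
associative algebra `(A, ·, c)`. -/
theorem weakly_unital_bijective_is_twisting_of_associative
    {k A : Type*} [CommRing k] [AddCommGroup A] [Module k A]
    (mul : A →ₗ[k] A →ₗ[k] A) (α β : A →ₗ[k] A)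
    (hom : ∀ x y z : A, mul (α x) (mul y z) = mul (mul x y) (α z))
    (hβα : ∀ x : A, β (α x) = x) (hαβ : ∀ x : A, α (β x) = x)
    (c : A) (hc : ∀ x : A, α x = mul c x)
    (dot : A → A → A) (hdot : dot = fun x y => β (mul x y)) :
    (∀ x y z : A, mul x (β (mul y z)) = mul (β (mul x y)) z) ∧
    (∀ x y z : A, dot (dot x y) z = dot x (dot y z)) ∧
    (∀ x : A, dot c x = x) ∧
    (∀ x y : A, mul x y = α (dot x y)) := by
  set d : A := β c with hd_def
  set e : A := β (mul d d) with he_def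
  have hαd : α d = c := by rw [hd_def]; exact hαβ c
  have hαe : α e = mul d d := by rw [he_def]; exact hαβ (mul d d)
  have hinj : ∀ x y : A, α x = α y → x = y := by
    intro x y h
    have h2 := congrArg β h
    rwa [hβα, hβα] at h2
  -- L1 : mul (α c) (mul d p) = α (α p)
  have L1 : ∀ p : A, mul (α c) (mul d p) = α (α p) := by
    intro p
    calc mul (α c) (mul d p) = mul (mul c d) (α p) := hom c d p
      _ = mul (α d) (α p) := by rw [← hc d]
      _ = mul c (α p) := by rw [hαd]
      _ = α (α p) := (hc (α p)).symm
  -- hA1 : mul d (mul d e) = mul (mul (β d) d) (mul d d)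
  have hA1 : mul d (mul d e) = mul (mul (β d) d) (mul d d) := by
    calc mul d (mul d e) = mul (α (β d)) (mul d e) := by rw [hαβ d]
      _ = mul (mul (β d) d) (α e) := hom (β d) d e
      _ = mul (mul (β d) d) (mul d d) := by rw [hαe]
  -- L2 : α (mul d d) = mul (mul d d) c
  have L2 : α (mul d d) = mul (mul d d) c := by
    calc α (mul d d) = mul c (mul d d) := hc (mul d d)
      _ = mul (α d) (mul d d) := by rw [hαd]
      _ = mul (mul d d) (α d) := hom d d d
      _ = mul (mul d d) c := by rw [hαd]
  -- Lemma A : mul d e = mul e d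
  have lemA : mul d e = mul e d := by
    apply hinj
    apply hinj
    calc α (α (mul d e))
        = mul (α c) (mul d (mul d e)) := (L1 (mul d e)).symm
      _ = mul (α c) (mul (mul (β d) d) (mul d d)) := by rw [hA1]
      _ = mul (mul c (mul (β d) d)) (α (mul d d)) := hom c (mul (β d) d) (mul d d)
      _ = mul (α (mul (β d) d)) (α (mul d d)) := by rw [← hc (mul (β d) d)]
      _ = mul (α (mul (β d) d)) (mul (mul d d) c) := by rw [L2]
      _ = mul (mul (mul (β d) d) (mul d d)) (α c) := hom (mul (β d) d) (mul d d) c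
      _ = mul (mul d (mul d e)) (α c) := by rw [← hA1]
      _ = mul (α d) (mul (mul d e) c) := (hom d (mul d e) c).symm
      _ = mul c (mul (mul d e) c) := by rw [hαd]
      _ = α (mul (mul d e) c) := (hc (mul (mul d e) c)).symm
      _ = α (mul (mul d e) (α d)) := by rw [hαd]
      _ = α (mul (α d) (mul e d)) := by rw [hom d e d]
      _ = α (mul c (mul e d)) := by rw [hαd]
      _ = α (α (mul e d)) := by rw [← hc (mul e d)]
  -- Lemma B : mul e w = mul d (β (mul d w))
  have lemB : ∀ w : A, mul e w = mul d (β (mul d w)) := by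
    intro w
    apply hinj
    calc α (mul e w) = mul c (mul e w) := hc (mul e w)
      _ = mul (α d) (mul e w) := by rw [hαd]
      _ = mul (mul d e) (α w) := hom d e w
      _ = mul (mul e d) (α w) := by rw [lemA]
      _ = mul (α e) (mul d w) := (hom e d w).symm
      _ = mul (mul d d) (mul d w) := by rw [hαe]
      _ = mul (mul d d) (α (β (mul d w))) := by rw [hαβ (mul d w)]
      _ = mul (α d) (mul d (β (mul d w))) := (hom d d (β (mul d w))).symm
      _ = mul c (mul d (β (mul d w))) := by rw [hαd]
      _ = α (mul d (β (mul d w))) := (hc (mul d (β (mul d w)))).symm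
  -- Lemma C : mul d (β (mul x y)) = mul (β (mul d x)) y
  have lemC : ∀ x y : A, mul d (β (mul x y)) = mul (β (mul d x)) y := by
    intro x y
    apply hinj
    calc α (mul d (β (mul x y)))
        = mul c (mul d (β (mul x y))) := hc (mul d (β (mul x y)))
      _ = mul (α d) (mul d (β (mul x y))) := by rw [hαd]
      _ = mul (mul d d) (α (β (mul x y))) := hom d d (β (mul x y))
      _ = mul (mul d d) (mul x y) := by rw [hαβ (mul x y)]
      _ = mul (α e) (mul x y) := by rw [hαe]
      _ = mul (mul e x) (α y) := hom e x y
      _ = mul (mul d (β (mul d x))) (α y) := by rw [lemB x]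
      _ = mul (α d) (mul (β (mul d x)) y) := (hom d (β (mul d x)) y).symm
      _ = mul c (mul (β (mul d x)) y) := by rw [hαd]
      _ = α (mul (β (mul d x)) y) := (hc (mul (β (mul d x)) y)).symm
  -- Main identity
  have mainG : ∀ x y z : A, mul x (β (mul y z)) = mul (β (mul x y)) z := by
    intro x y z
    apply hinj
    calc α (mul x (β (mul y z)))
        = mul c (mul x (β (mul y z))) := hc (mul x (β (mul y z)))
      _ = mul (α d) (mul x (β (mul y z))) := by rw [hαd]
      _ = mul (mul d x) (α (β (mul y z))) := hom d x (β (mul y z))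
      _ = mul (mul d x) (mul y z) := by rw [hαβ (mul y z)]
      _ = mul (α (β (mul d x))) (mul y z) := by rw [hαβ (mul d x)]
      _ = mul (mul (β (mul d x)) y) (α z) := hom (β (mul d x)) y z
      _ = mul (mul d (β (mul x y))) (α z) := by rw [← lemC x y]
      _ = mul (α d) (mul (β (mul x y)) z) := (hom d (β (mul x y)) z).symm
      _ = mul c (mul (β (mul x y)) z) := by rw [hαd]
      _ = α (mul (β (mul x y)) z) := (hc (mul (β (mul x y)) z)).symm
  refine ⟨mainG, ?_, ?_, ?_⟩
  · intro x y z
    simp only [hdot]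
    exact (congrArg β (mainG x y z)).symm
  · intro x
    simp only [hdot]
    rw [← hc x]
    exact hβα x
  · intro x y
    simp only [hdot]
    rw [hαβ (mul x y)]
end
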